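/- arXiv:2309.08212 — 5 statements merged into one kernel-verified Lean document; each statement's English description precedes it below -/
import Mathlib

section
/- Let R be a commutative ring and M a finitely presented R-module. Then the function on Spec(R) sending a prime ideal 𝔭 to dim_{κ(𝔭)}(M ⊗_R κ(𝔭)) is upper semi-continuous: for every prime 𝔮 there exists f ∈ R with f ∉ 𝔮 such that for all primes 𝔭 not containing f, dim_{κ(𝔭)}(M ⊗_R κ(𝔭)) ≤ dim_{κ(𝔮)}(M ⊗_R κ(𝔮)). -/
open TensorProduct

/-- The residue field `κ(𝔭)` at a prime `𝔭` of `R`. -/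
noncomputable abbrev residueFieldAt {R : Type*} [CommRing R] (p : PrimeSpectrum R) : Type _ :=
  IsLocalRing.ResidueField (Localization.AtPrime p.asIdeal)

set_option maxHeartbeats 800000

/-- For a finitely presented module `M` over a commutative ring `R`, the
function `𝔭 ↦ dim_{κ(𝔭)}(M ⊗_R κ(𝔭))` is upper semi-continuous on `Spec R`. -/
theorem fiber_dim_upper_semicontinuous {R M : Type*} [CommRing R] [AddCommGroup M] [Module R M]
    [Module.FinitePresentation R M] (q : PrimeSpectrum R) :
    ∃ f : R, f ∉ q.asIdeal ∧ ∀ p : PrimeSpectrum R, f ∉ p.asIdeal →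
      Module.finrank (residueFieldAt p) (residueFieldAt p ⊗[R] M) ≤
        Module.finrank (residueFieldAt q) (residueFieldAt q ⊗[R] M) := by
  classical
  set k := IsLocalRing.ResidueField (Localization.AtPrime q.asIdeal) with hk
  set V := k ⊗[R] M with hV
  -- the pure tensors `1 ⊗ m` span `V` over `k`
  have hspan : Submodule.span k (Set.range fun m : M => (1:k) ⊗ₜ[R] m) = ⊤ := by
    rw [eq_top_iff]
    rintro x -
    induction x with
    | zero => exact Submodule.zero_mem _
    | tmul c m =>
        have h : c ⊗ₜ[R] m = c • ((1:k) ⊗ₜ[R] m) := by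
          rw [TensorProduct.smul_tmul', smul_eq_mul, mul_one]
        rw [h]; exact Submodule.smul_mem _ _ (Submodule.subset_span ⟨m, rfl⟩)
    | add x y hx hy => exact Submodule.add_mem _ hx hy
  have hfin : FiniteDimensional k V := inferInstance
  obtain ⟨s, hsub, hs, hind⟩ := exists_linearIndependent k (Set.range fun m : M => (1:k) ⊗ₜ[R] m)
  rw [hspan] at hs
  have hsfin : s.Finite := hind.setFinite
  have := hsfin.fintype
  let bV : Module.Basis s k V := Module.Basis.mk hind (by rw [Subtype.range_coe, hs])
  have hcard : Module.finrank k V = Fintype.card s := Module.finrank_eq_card_basis bV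
  -- choose lifts of the basis vectors
  have hlift : ∀ x : s, ∃ mm : M, (1:k) ⊗ₜ[R] mm = (x : V) := fun x => hsub x.2
  choose mvec hmv using hlift
  -- the localization at q
  let Rq := Localization.AtPrime q.asIdeal
  let fq : M →ₗ[R] Rq ⊗[R] M := TensorProduct.mk R Rq M 1
  have : IsLocalizedModule q.asIdeal.primeCompl fq :=
    (isLocalizedModule_iff_isBaseChange q.asIdeal.primeCompl Rq fq).mpr
      (TensorProduct.isBaseChange R M Rq)
  -- Nakayama: the `mvec` generate `Rq ⊗ M` over `Rq`
  have hNak : Submodule.span Rq (Set.range fun x : s => (1:Rq) ⊗ₜ[R] mvec x) = ⊤ := by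
    let e : k ⊗[Rq] (Rq ⊗[R] M) ≃ₗ[k] V := AlgebraTensorModule.cancelBaseChange R Rq k k M
    refine IsLocalRing.span_eq_top_of_tmul_eq_basis (R := Rq)
      (f := fun x : s => (1:Rq) ⊗ₜ[R] mvec x) (bV.map e.symm) (fun x => ?_)
    apply e.injective
    simp only [Module.Basis.map_apply, LinearEquiv.apply_symm_apply, bV, Module.Basis.mk_apply, e]
    rw [AlgebraTensorModule.cancelBaseChange_tmul, one_smul, hmv x]
  -- the localized submodule generated by `mvec` is everything
  let N : Submodule R M := Submodule.span R (Set.range mvec)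
  have hNloc : N.localized' Rq q.asIdeal.primeCompl fq = ⊤ := by
    rw [Submodule.localized'_span, ← Set.range_comp]
    exact hNak
  -- hence every element of `M` is, up to a unit outside `q`, in `N`
  have hgen : ∀ g : M, ∃ c : R, c ∈ q.asIdeal.primeCompl ∧ c • g ∈ N := by
    intro g
    have hmem : IsLocalizedModule.mk' fq g (1 : q.asIdeal.primeCompl) ∈ N.localized' Rq q.asIdeal.primeCompl fq := by
      rw [hNloc]; trivial
    obtain ⟨mm, hmm, t, ht⟩ := hmem
    rw [IsLocalizedModule.mk'_eq_mk'_iff] at ht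
    obtain ⟨u, hu⟩ := ht
    refine ⟨(u : R) * (t : R), Submonoid.mul_mem _ u.2 t.2, ?_⟩
    have : ((u : R) * (t : R)) • g = (u : R) • mm := by
      rw [mul_smul]
      simpa [Submonoid.smul_def] using hu
    rw [this]
    exact N.smul_mem _ hmm
  -- pick a finite generating set of `M`
  obtain ⟨σ, hσ⟩ : (⊤ : Submodule R M).FG := Module.Finite.fg_top
  choose c hc1 hc2 using fun g : σ => hgen (g : M)
  refine ⟨∏ g ∈ σ.attach, c g, Submonoid.prod_mem _ (fun g _ => hc1 g), ?_⟩
  intro p hfp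
  have hcp : ∀ g : σ, c g ∉ p.asIdeal := by
    intro g hg
    exact hfp (by
      have : c g ∣ ∏ g ∈ σ.attach, c g := Finset.dvd_prod_of_mem c (Finset.mem_attach _ g)
      obtain ⟨d, hd⟩ := this
      rw [hd]; exact Ideal.mul_mem_right _ _ hg)
  set κ := IsLocalRing.ResidueField (Localization.AtPrime p.asIdeal) with hκ
  -- the images of `mvec` span the fiber at `p`
  have hspanP : Submodule.span κ (Set.range fun x : s => (1:κ) ⊗ₜ[R] mvec x) = ⊤ := by
    set P := Submodule.span κ (Set.range fun x : s => (1:κ) ⊗ₜ[R] mvec x) with hP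
    have hNP : ∀ mm ∈ N, (1:κ) ⊗ₜ[R] mm ∈ P := by
      intro mm hmm
      have : (1:κ) ⊗ₜ[R] mm ∈ Submodule.map (TensorProduct.mk R κ M 1) N :=
        ⟨mm, hmm, rfl⟩
      have hle : Submodule.map (TensorProduct.mk R κ M 1) N ≤ P.restrictScalars R := by
        rw [Submodule.map_span, ← Set.range_comp]
        exact Submodule.span_le_restrictScalars R κ _
      exact hle this
    -- units
    have hunit : ∀ g : σ, IsUnit (algebraMap R κ (c g)) := by
      intro g
      rw [IsScalarTower.algebraMap_apply R (Localization.AtPrime p.asIdeal) κ]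
      exact (IsLocalization.map_units (Localization.AtPrime p.asIdeal)
        (⟨c g, hcp g⟩ : p.asIdeal.primeCompl)).map (algebraMap (Localization.AtPrime p.asIdeal) κ)
    have hσP : ∀ g : σ, (1:κ) ⊗ₜ[R] (g : M) ∈ P := by
      intro g
      have h1 : (1:κ) ⊗ₜ[R] (c g • (g : M)) ∈ P := hNP _ (hc2 g)
      rw [TensorProduct.tmul_smul, ← algebraMap_smul κ (c g)] at h1
      obtain ⟨u, hu⟩ := hunit g
      rw [← hu] at h1
      have := P.smul_mem (↑u⁻¹) h1
      rwa [← smul_assoc, smul_eq_mul, Units.inv_mul, one_smul] at this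
    -- every `1 ⊗ m` lies in `P`
    have hT : ∀ mm : M, (1:κ) ⊗ₜ[R] mm ∈ P := by
      have : (⊤ : Submodule R M) ≤ Submodule.comap
          ((TensorProduct.mk R κ M 1) : M →ₗ[R] κ ⊗[R] M) (P.restrictScalars R) := by
        rw [← hσ, Submodule.span_le]
        intro g hg
        exact hσP ⟨g, hg⟩
      intro mm
      exact this trivial
    rw [eq_top_iff]
    rintro w -
    induction w with
    | zero => exact Submodule.zero_mem _
    | tmul a mm =>
        have h : a ⊗ₜ[R] mm = a • ((1:κ) ⊗ₜ[R] mm) := by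
          rw [TensorProduct.smul_tmul', smul_eq_mul, mul_one]
        rw [h]; exact Submodule.smul_mem _ _ (hT mm)
    | add x y hx hy => exact Submodule.add_mem _ hx hy
  calc Module.finrank κ (κ ⊗[R] M) ≤ Fintype.card s := finrank_le_of_span_eq_top hspanP
    _ = Module.finrank k V := hcard.symm
end

section
/- Let R be a commutative ring, A an (m × n)-matrix over R, and 𝔮 a prime of R such that the matrix A ⊗ κ(𝔮) over the residue field has rank at least k. Then there exists f ∈ R \ 𝔮 such that for every prime 𝔭 with f ∉ 𝔭, the matrix A ⊗ κ(𝔭) has rank at least k. -/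
/-- From a family whose span has finrank at least `k`, one can extract `k` members forming a
linearly independent family. -/
lemma exists_comp_linearIndependent {K V ι : Type*} [Field K] [AddCommGroup V] [Module K V]
    [Fintype ι] (v : ι → V) {k : ℕ}
    (hk : k ≤ Module.finrank K (Submodule.span K (Set.range v))) :
    ∃ c : Fin k → ι, LinearIndependent K (v ∘ c) := by
  classical
  obtain ⟨b, hbsub, hbspan, hbind⟩ := exists_linearIndependent K (Set.range v)
  have hbfin : b.Finite := (Set.finite_range v).subset hbsub
  haveI : Fintype b := hbfin.fintype
  have hcard : Module.finrank K (Submodule.span K b) = b.toFinset.card :=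
    finrank_span_set_eq_card hbind
  have hk' : k ≤ Fintype.card b := by
    rw [hbspan] at hcard
    rw [Set.toFinset_card] at hcard
    omega
  let emb : Fin k ↪ b := (Fin.castLEEmb hk').trans (Fintype.equivFin b).symm.toEmbedding
  have hind : LinearIndependent K (fun i : Fin k => ((emb i : V))) :=
    hbind.comp emb emb.injective
  have hchoice : ∀ i : Fin k, ∃ j : ι, v j = (emb i : V) := fun i => hbsub (emb i).2
  choose c hc using hchoice
  refine ⟨c, ?_⟩
  have : v ∘ c = fun i : Fin k => ((emb i : V)) := funext fun i => hc i
  rw [this]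
  exact hind

/-- If some `k × k` submatrix has nonzero determinant, the rank is at least `k`. -/
lemma le_rank_of_submatrix_det_ne_zero {K : Type*} [Field K] {m n k : ℕ}
    (A : Matrix (Fin m) (Fin n) K) (r : Fin k → Fin m) (c : Fin k → Fin n)
    (h : (A.submatrix r c).det ≠ 0) : k ≤ A.rank := by
  classical
  have hu : IsUnit (A.submatrix r c) :=
    (Matrix.isUnit_iff_isUnit_det _).mpr (isUnit_iff_ne_zero.mpr h)
  have hrank : (A.submatrix r c).rank = k := by
    rw [Matrix.rank_of_isUnit _ hu, Fintype.card_fin]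
  have hfact : A.submatrix r c =
      ((1 : Matrix (Fin m) (Fin m) K).submatrix r id) * A *
        ((1 : Matrix (Fin n) (Fin n) K).submatrix id c) := by
    ext i j
    simp [Matrix.mul_apply, Matrix.one_apply, Finset.sum_ite_eq, Finset.sum_ite_eq']
  calc k = (A.submatrix r c).rank := hrank.symm
    _ = (((1 : Matrix (Fin m) (Fin m) K).submatrix r id) * A *
          ((1 : Matrix (Fin n) (Fin n) K).submatrix id c)).rank := by rw [← hfact]
    _ ≤ (((1 : Matrix (Fin m) (Fin m) K).submatrix r id) * A).rank :=
        Matrix.rank_mul_le_left _ _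
    _ ≤ A.rank := Matrix.rank_mul_le_right _ _

/-- If the rank is at least `k`, then some `k × k` submatrix has nonzero determinant. -/
lemma exists_submatrix_det_ne_zero {K : Type*} [Field K] {m n k : ℕ}
    (A : Matrix (Fin m) (Fin n) K) (hk : k ≤ A.rank) :
    ∃ (r : Fin k → Fin m) (c : Fin k → Fin n), (A.submatrix r c).det ≠ 0 := by
  classical
  rw [Matrix.rank_eq_finrank_span_cols] at hk
  obtain ⟨c, hc⟩ := exists_comp_linearIndependent (fun j => A.transpose j) hk
  set B := A.submatrix id c with hB
  have hBT : LinearIndependent K (fun j => B.transpose j) := hc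
  have hBrank : B.rank = k := by
    rw [← Matrix.rank_transpose, LinearIndependent.rank_matrix (M := B.transpose) hBT, Fintype.card_fin]
  have hk2 : k ≤ Module.finrank K (Submodule.span K (Set.range B)) := by
    exact hBrank.symm.le.trans (Matrix.rank_eq_finrank_span_row B).le
  obtain ⟨r, hr⟩ := exists_comp_linearIndependent B hk2
  refine ⟨r, c, ?_⟩
  have hind : LinearIndependent K (fun i => (A.submatrix r c) i) := hr
  have hu : IsUnit (A.submatrix r c) := Matrix.linearIndependent_rows_iff_isUnit.mp hind
  exact ((Matrix.isUnit_iff_isUnit_det _).mp hu).ne_zero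

/-- Membership in a prime is detected by vanishing in the residue field. -/
lemma algebraMap_residueFieldAt_eq_zero_iff {R : Type*} [CommRing R] (p : PrimeSpectrum R)
    (x : R) : algebraMap R (residueFieldAt p) x = 0 ↔ x ∈ p.asIdeal := by
  have h : algebraMap R (residueFieldAt p) x =
      IsLocalRing.residue (Localization.AtPrime p.asIdeal)
        (algebraMap R (Localization.AtPrime p.asIdeal) x) := by
    rw [IsScalarTower.algebraMap_apply R (Localization.AtPrime p.asIdeal) (residueFieldAt p)]
    rfl
  rw [h, IsLocalRing.residue_eq_zero_iff]
  constructor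
  · intro hx
    have := Localization.AtPrime.comap_maximalIdeal (I := p.asIdeal)
    rw [← this]
    exact hx
  · intro hx
    have := Localization.AtPrime.comap_maximalIdeal (I := p.asIdeal)
    rw [← this] at hx
    exact hx

/-- If a matrix `A` over `R` has rank `≥ k` at a prime `𝔮`, then there is
`f ∈ R \ 𝔮` such that `A` has rank `≥ k` at every prime `𝔭` not containing `f`. -/
theorem matrix_rank_lower_semicontinuous {R : Type*} [CommRing R] {m n : ℕ}
    (A : Matrix (Fin m) (Fin n) R) (q : PrimeSpectrum R) (k : ℕ)
    (hk : k ≤ (A.map (algebraMap R (residueFieldAt q))).rank) :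
    ∃ f : R, f ∉ q.asIdeal ∧ ∀ p : PrimeSpectrum R, f ∉ p.asIdeal →
      k ≤ (A.map (algebraMap R (residueFieldAt p))).rank := by
  obtain ⟨r, c, hd⟩ := exists_submatrix_det_ne_zero _ hk
  refine ⟨(A.submatrix r c).det, ?_, ?_⟩
  · intro hmem
    apply hd
    have : algebraMap R (residueFieldAt q) (A.submatrix r c).det = 0 :=
      (algebraMap_residueFieldAt_eq_zero_iff q _).mpr hmem
    rw [RingHom.map_det] at this
    simpa [Matrix.submatrix_map] using this
  · intro p hp
    apply le_rank_of_submatrix_det_ne_zero (A.map (algebraMap R (residueFieldAt p))) r c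
    have : algebraMap R (residueFieldAt p) (A.submatrix r c).det ≠ 0 := by
      intro h0
      exact hp ((algebraMap_residueFieldAt_eq_zero_iff p _).mp h0)
    rw [RingHom.map_det] at this
    simpa [Matrix.submatrix_map] using this
end

section
/- Let R be a commutative ring containing ℚ, let 𝔤 be a finite-dimensional semisimple Lie algebra over ℚ, and suppose R' is a faithfully flat commutative R-algebra and L is a Lie algebra over R, finitely generated projective as an R-module, such that L ⊗_R R' is isomorphic as an R'-Lie algebra to 𝔤 ⊗_ℚ R'. Then the center of L is zero. -/
open TensorProduct

/-- In the base change of a semisimple Lie algebra, an element commuting with all `1 ⊗ g`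
is zero. -/
lemma aux_central_eq_zero {R' 𝔤 : Type*} [CommRing R'] [Algebra ℚ R']
    [LieRing 𝔤] [LieAlgebra ℚ 𝔤] [FiniteDimensional ℚ 𝔤] [LieAlgebra.IsSemisimple ℚ 𝔤]
    (z : R' ⊗[ℚ] 𝔤) (hz : ∀ g : 𝔤, ⁅z, (1:R') ⊗ₜ[ℚ] g⁆ = 0) : z = 0 := by
  classical
  set n := Module.finrank ℚ 𝔤
  let b : Module.Basis (Fin n) ℚ 𝔤 := Module.finBasis ℚ 𝔤
  let A : Fin n → (𝔤 →ₗ[ℚ] 𝔤) := fun k => LieAlgebra.ad ℚ 𝔤 (b k)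
  let Φ : 𝔤 →ₗ[ℚ] (Fin n → 𝔤) := LinearMap.pi A
  have hΦinj : Function.Injective Φ := by
    rw [← LinearMap.ker_eq_bot, LinearMap.ker_eq_bot']
    intro v hv
    have hb : ∀ k, ⁅b k, v⁆ = 0 := fun k => congrFun hv k
    have hall : ∀ g : 𝔤, ⁅g, v⁆ = 0 := by
      have h0 : ((LieAlgebra.ad ℚ 𝔤) :
          𝔤 →ₗ[ℚ] Module.End ℚ 𝔤).flip v = 0 := b.ext fun k => by simpa using hb k
      intro g
      simpa using congrFun (congrArg DFunLike.coe h0) g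
    have hv' : v ∈ LieAlgebra.center ℚ 𝔤 := (LieModule.mem_maxTrivSubmodule ℚ 𝔤 𝔤 v).2 hall
    rwa [LieAlgebra.center_eq_bot, LieSubmodule.mem_bot] at hv'
  have hTinj : Function.Injective (LinearMap.lTensor R' Φ) :=
    Module.Flat.lTensor_preserves_injective_linearMap Φ hΦinj
  have key : ∀ (g : 𝔤) (w : R' ⊗[ℚ] 𝔤),
      LinearMap.lTensor R' (LieAlgebra.ad ℚ 𝔤 g) w = ⁅(1:R') ⊗ₜ[ℚ] g, w⁆ := by
    intro g w
    induction w using TensorProduct.induction_on with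
    | zero => simp
    | tmul r v => simp [LieAlgebra.ExtendScalars.bracket_tmul]
    | add x y hx hy => simp [hx, hy]
  have hΦz : LinearMap.lTensor R' Φ z = 0 := by
    apply (TensorProduct.piRight ℚ ℚ R' (fun _ : Fin n => 𝔤)).injective
    rw [map_zero]
    funext k
    have comp : ∀ w : R' ⊗[ℚ] 𝔤,
        TensorProduct.piRightHom ℚ ℚ R' (fun _ : Fin n => 𝔤) (LinearMap.lTensor R' Φ w) k
          = LinearMap.lTensor R' (A k) w := by
      intro w
      induction w using TensorProduct.induction_on with
      | zero => simp
      | tmul r v =>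
        simp [TensorProduct.piRightHom_tmul, Φ, A]
      | add x y hx hy => simp [map_add, Pi.add_apply, hx, hy]
    rw [TensorProduct.piRight_apply, comp z, key (b k) z, ← lie_skew, hz (b k), neg_zero]
    rfl
  exact hTinj (by simpa using hΦz)

lemma aux_tmul_eq_zero {R R' L : Type*} [CommRing R] [AddCommGroup L] [Module R L]
    [CommRing R'] [Algebra R R'] [Module.FaithfullyFlat R R']
    (x : L) (h : ((1:R') ⊗ₜ[R] x : R' ⊗[R] L) = 0) : x = 0 := by
  have hf : LinearMap.lTensor R' (LinearMap.toSpanSingleton R L x) = 0 := by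
    apply TensorProduct.ext'
    intro r' s
    have h1 : (r' ⊗ₜ[R] x : R' ⊗[R] L) = r' • ((1:R') ⊗ₜ[R] x) := by
      rw [TensorProduct.smul_tmul', smul_eq_mul, mul_one]
    simp only [LinearMap.lTensor_tmul, LinearMap.toSpanSingleton_apply,
      TensorProduct.tmul_smul, LinearMap.zero_apply]
    rw [h1, h, smul_zero, smul_zero]
  have : LinearMap.toSpanSingleton R L x = 0 :=
    (Module.FaithfullyFlat.zero_iff_lTensor_zero R R' _).2 hf
  simpa using congrFun (congrArg DFunLike.coe this) (1:R)

/-- Let `R` be a commutative ring containing `ℚ`, `𝔤` a finite-dimensional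
semisimple Lie algebra over `ℚ`, `R'` a faithfully flat `R`-algebra, and `L` an `R`-Lie
algebra, finitely generated projective as an `R`-module, with `L ⊗_R R' ≅ 𝔤 ⊗_ℚ R'` as
`R'`-Lie algebras. Then the center of `L` is zero. -/
theorem center_eq_bot_of_twisted_form {R R' L 𝔤 : Type*} [CommRing R] [Algebra ℚ R]
    [LieRing 𝔤] [LieAlgebra ℚ 𝔤] [FiniteDimensional ℚ 𝔤] [LieAlgebra.IsSemisimple ℚ 𝔤]
    [LieRing L] [LieAlgebra R L] [Module.Finite R L] [Module.Projective R L]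
    [CommRing R'] [Algebra R R'] [Algebra ℚ R'] [IsScalarTower ℚ R R']
    [Module.FaithfullyFlat R R']
    (e : Nonempty ((R' ⊗[R] L) ≃ₗ⁅R'⁆ (R' ⊗[ℚ] 𝔤))) :
    LieAlgebra.center R L = ⊥ := by
  obtain ⟨e⟩ := e
  rw [eq_bot_iff]
  intro x hx
  rw [LieSubmodule.mem_bot]
  have hx' : ∀ y : L, ⁅y, x⁆ = 0 := (LieModule.mem_maxTrivSubmodule R L L x).1 hx
  have h1 : ∀ w : R' ⊗[R] L, ⁅((1:R') ⊗ₜ[R] x : R' ⊗[R] L), w⁆ = 0 := by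
    intro w
    induction w using TensorProduct.induction_on with
    | zero => simp
    | tmul r y =>
      rw [LieAlgebra.ExtendScalars.bracket_tmul]
      rw [← lie_skew, hx' y, neg_zero, TensorProduct.tmul_zero]
    | add a c ha hc => rw [lie_add, ha, hc, add_zero]
  have hz : ∀ g : 𝔤, ⁅e ((1:R') ⊗ₜ[R] x), (1:R') ⊗ₜ[ℚ] g⁆ = 0 := by
    intro g
    have h2 := (e.map_lie ((1:R') ⊗ₜ[R] x) (e.symm ((1:R') ⊗ₜ[ℚ] g))).symm
    have he0 : e (0 : R' ⊗[R] L) = 0 := e.toLieHom.map_zero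
    simpa [h1, he0] using h2
  have hz0 : e ((1:R') ⊗ₜ[R] x) = 0 := aux_central_eq_zero _ hz
  have h0 : ((1:R') ⊗ₜ[R] x : R' ⊗[R] L) = 0 := by
    apply e.injective
    simpa using hz0
  exact aux_tmul_eq_zero x h0
end

section
/- Let 𝔤 be a finite-dimensional complex Lie algebra, σ an automorphism of order dividing d, R = ℂ[t^{±1}] and R_d = ℂ[t^{±1/d}]. Then the natural multiplication map L(𝔤, σ) ⊗_R R_d → 𝔤 ⊗_ℂ R_d, (x ⊗ t^{i/d}) ⊗ r ↦ x ⊗ t^{i/d} r, is an isomorphism of R_d-Lie algebras. In particular L(𝔤, σ) is a twisted form of 𝔤 ⊗_ℂ R split by the extension R_d/R. -/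
set_option synthInstance.maxHeartbeats 1000000
set_option maxHeartbeats 2000000
open TensorProduct LaurentPolynomial

/-- The subalgebra `R = ℂ[t, t⁻¹]` of `R_d = ℂ[t^{±1/d}] = ℂ[s, s⁻¹]`, generated by
`t = s^d` and `t⁻¹ = s^{-d}`. -/
noncomputable def laurentBase (d : ℕ) : Subalgebra ℂ (LaurentPolynomial ℂ) :=
  Algebra.adjoin ℂ ({T (d : ℤ), T (-(d : ℤ))} : Set (LaurentPolynomial ℂ))

/-- The loop algebra `L(𝔤, σ) = ⊕_{i ∈ ℤ} 𝔤_{i mod d} ⊗ t^{i/d}` inside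
`𝔤 ⊗_ℂ ℂ[t^{±1/d}]`, as an `R`-submodule (`R = ℂ[t,t⁻¹]`); it is the span of the elements
`T i ⊗ x` with `x ∈ 𝔤_{i mod d}`, the Laurent variable `s = T 1` playing the role of
`t^{1/d}`. -/
noncomputable def loopAlgebra (d : ℕ) (ξ : ℂ) {𝔤 : Type*} [LieRing 𝔤] [LieAlgebra ℂ 𝔤]
    (σ : 𝔤 ≃ₗ⁅ℂ⁆ 𝔤) : Submodule (laurentBase d) (LaurentPolynomial ℂ ⊗[ℂ] 𝔤) :=
  Submodule.span (laurentBase d)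
    {z | ∃ (i : ℤ) (x : 𝔤), σ x = ξ ^ (i % (d : ℤ)).toNat • x ∧ z = T i ⊗ₜ[ℂ] x}

section proj
variable {𝔤 : Type*} [AddCommGroup 𝔤] [Module ℂ 𝔤]

/-- Projection onto the `ξ^j`-eigenspace of `S`. -/
noncomputable def projE (d : ℕ) (ξ : ℂ) (S : Module.End ℂ 𝔤) (j : ℕ) : Module.End ℂ 𝔤 :=
  (d : ℂ)⁻¹ • ∑ k ∈ Finset.range d, (ξ ^ (j * k))⁻¹ • S ^ k

lemma sum_projE {d : ℕ} (hd : 0 < d) {ξ : ℂ} (hξ : IsPrimitiveRoot ξ d)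
    (S : Module.End ℂ 𝔤) :
    ∑ j ∈ Finset.range d, projE d ξ S j = 1 := by
  have hd' : (d : ℂ) ≠ 0 := Nat.cast_ne_zero.mpr hd.ne'
  unfold projE
  rw [← Finset.smul_sum, Finset.sum_comm]
  have key : ∀ k ∈ Finset.range d,
      (∑ j ∈ Finset.range d, (ξ ^ (j * k))⁻¹ • S ^ k)
        = (if k = 0 then (d : ℂ) else 0) • S ^ k := by
    intro k hk
    rw [← Finset.sum_smul]
    congr 1
    have : ∀ j, (ξ ^ (j * k))⁻¹ = ((ξ ^ k)⁻¹) ^ j := by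
      intro j; simp only [← inv_pow, ← pow_mul]; ring_nf
    simp_rw [this]
    rcases eq_or_ne k 0 with rfl | hk0
    · simp
    · rw [if_neg hk0]
      have hne : (ξ ^ k)⁻¹ ≠ 1 := by
        simp only [ne_eq, inv_eq_one]
        exact hξ.pow_ne_one_of_pos_of_lt hk0 (Finset.mem_range.mp hk)
      rw [geom_sum_eq hne]
      have : ((ξ ^ k)⁻¹) ^ d = 1 := by
        rw [inv_pow, ← pow_mul, Nat.mul_comm, pow_mul, hξ.pow_eq_one, one_pow, inv_one]

      rw [this, sub_self, zero_div]
  rw [Finset.sum_congr rfl key]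
  have : ∀ k ∈ Finset.range d, (if k = 0 then (d:ℂ) else 0) • S ^ k
      = if k = 0 then (d:ℂ) • S ^ 0 else 0 := by
    intro k _; split <;> simp_all
  rw [Finset.sum_congr rfl this, Finset.sum_ite_eq' (Finset.range d) 0]
  simp [Finset.mem_range.mpr hd, smul_smul, inv_mul_cancel₀ hd']

lemma projE_comm {d : ℕ} (hd : 0 < d) {ξ : ℂ} (hξ : IsPrimitiveRoot ξ d)
    {S : Module.End ℂ 𝔤} (hS : S ^ d = 1) (j : ℕ) :
    S * projE d ξ S j = ξ ^ j • projE d ξ S j := by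
  have hξ0 : ξ ≠ 0 := hξ.ne_zero hd.ne'
  set h : ℕ → Module.End ℂ 𝔤 := fun m => (ξ ^ (j * m))⁻¹ • S ^ m with hh
  have hshift : ∑ k ∈ Finset.range d, h (k + 1) = ∑ k ∈ Finset.range d, h k := by
    have h1 := Finset.sum_range_succ' h d
    have h2 := Finset.sum_range_succ h d
    have hd0 : h d = h 0 := by
      simp only [hh]
      rw [Nat.mul_comm j d, pow_mul, hξ.pow_eq_one, one_pow, inv_one, hS, Nat.mul_zero,
        pow_zero, inv_one, pow_zero]
    rw [h2, hd0] at h1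
    exact add_right_cancel h1.symm
  unfold projE
  rw [mul_smul_comm, smul_comm]
  congr 1
  calc S * ∑ k ∈ Finset.range d, (ξ ^ (j * k))⁻¹ • S ^ k
      = ∑ k ∈ Finset.range d, (ξ ^ (j * k))⁻¹ • S ^ (k + 1) := by
        rw [Finset.mul_sum]
        refine Finset.sum_congr rfl fun k _ => ?_
        rw [mul_smul_comm, ← pow_succ']
    _ = ξ ^ j • ∑ k ∈ Finset.range d, h (k + 1) := by
        rw [Finset.smul_sum]
        refine Finset.sum_congr rfl fun k _ => ?_
        simp only [hh]
        rw [smul_smul]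
        congr 1
        rw [Nat.mul_add, Nat.mul_one, pow_add, mul_inv]
        field_simp
    _ = ξ ^ j • ∑ k ∈ Finset.range d, h k := by rw [hshift]
    _ = ξ ^ j • ∑ k ∈ Finset.range d, (ξ ^ (j * k))⁻¹ • S ^ k := rfl

lemma projE_eigvec {d : ℕ} (hd : 0 < d) {ξ : ℂ} (hξ : IsPrimitiveRoot ξ d)
    {S : Module.End ℂ 𝔤} {m : ℕ} (hm : m < d) {x : 𝔤} (hx : S x = ξ ^ m • x)
    {j : ℕ} (hj : j < d) :
    projE d ξ S j x = if j = m then x else 0 := by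
  have hd' : (d : ℂ) ≠ 0 := Nat.cast_ne_zero.mpr hd.ne'
  have hξ0 : ξ ≠ 0 := hξ.ne_zero hd.ne'
  have hpow : ∀ k : ℕ, (S ^ k) x = (ξ ^ m) ^ k • x := by
    intro k
    induction k with
    | zero => simp
    | succ n ih => rw [pow_succ, Module.End.mul_apply, hx, map_smul, ih, smul_smul, pow_succ,
        mul_comm]
  have key : projE d ξ S j x
      = (d : ℂ)⁻¹ • (∑ k ∈ Finset.range d, (ξ ^ m * (ξ ^ j)⁻¹) ^ k) • x := by
    unfold projE
    rw [LinearMap.smul_apply, LinearMap.sum_apply, Finset.sum_smul]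
    congr 1
    refine Finset.sum_congr rfl fun k _ => ?_
    rw [LinearMap.smul_apply, hpow, smul_smul]
    congr 1
    rw [mul_pow, inv_pow, ← pow_mul, ← pow_mul]
    first | ring | rw [← pow_mul]; ring
  rcases eq_or_ne j m with rfl | hne
  · rw [key, if_pos rfl]
    rw [mul_inv_cancel₀ (pow_ne_zero j hξ0)]
    simp [smul_smul, inv_mul_cancel₀ hd']
  · rw [key, if_neg hne]
    have hr : ξ ^ m * (ξ ^ j)⁻¹ ≠ 1 := by
      intro h
      have hjm : ξ ^ m = ξ ^ j := by
        field_simp at h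
        first
          | exact h
          | exact h.symm
      exact hne (hξ.pow_inj hj hm hjm.symm)
    rw [geom_sum_eq hr]
    have : (ξ ^ m * (ξ ^ j)⁻¹) ^ d = 1 := by
      rw [mul_pow, ← pow_mul, Nat.mul_comm, pow_mul, hξ.pow_eq_one, one_pow, inv_pow,
        ← pow_mul, Nat.mul_comm, pow_mul, hξ.pow_eq_one, one_pow, inv_one, mul_one]
    rw [this, sub_self, zero_div, zero_smul, smul_zero]

end proj

lemma T_mul_mem (d : ℕ) (q : ℤ) : (T ((d:ℤ) * q) : LaurentPolynomial ℂ) ∈ laurentBase d := by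
  rcases le_or_gt 0 q with h | h
  · lift q to ℕ using h
    have : (T ((d:ℤ) * q) : LaurentPolynomial ℂ) = T (d:ℤ) ^ (q:ℕ) := by
      rw [T_pow]; congr 1; push_cast; ring
    rw [this]
    exact pow_mem (Algebra.subset_adjoin (Set.mem_insert _ _)) _
  · have : (T ((d:ℤ) * q) : LaurentPolynomial ℂ) = T (-(d:ℤ)) ^ ((-q).toNat) := by
      rw [T_pow]; congr 1
      have hq : (((-q).toNat : ℤ)) = -q := Int.toNat_of_nonneg (by omega)
      rw [hq]; ring
    rw [this]
    exact pow_mem (Algebra.subset_adjoin (Set.mem_insert_of_mem _ (Set.mem_singleton _))) _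


set_option maxHeartbeats 8000000

/-- The natural multiplication map
`R_d ⊗_R L(𝔤, σ) → 𝔤 ⊗_ℂ R_d`, `r ⊗ (x ⊗ t^{i/d}) ↦ x ⊗ t^{i/d} r`, is bijective (it is
`R_d`-linear by construction, and an isomorphism of `R_d`-Lie algebras). In particular
`L(𝔤, σ)` is a twisted form of `𝔤 ⊗_ℂ R` split by the extension `R_d/R`. -/
theorem loopAlgebra_baseChange_bijective {𝔤 : Type*} [LieRing 𝔤] [LieAlgebra ℂ 𝔤]
    [FiniteDimensional ℂ 𝔤] (d : ℕ) (hd : 0 < d) (ξ : ℂ) (hξ : IsPrimitiveRoot ξ d)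
    (σ : 𝔤 ≃ₗ⁅ℂ⁆ 𝔤) (hσ : σ.toLieHom.toLinearMap ^ d = 1) :
    Function.Bijective
      (LinearMap.liftBaseChange (LaurentPolynomial ℂ) (loopAlgebra d ξ σ).subtype) := by
  classical
  set S : Module.End ℂ 𝔤 := σ.toLieHom.toLinearMap with hSdef
  set L : Submodule (laurentBase d) (LaurentPolynomial ℂ ⊗[ℂ] 𝔤) := loopAlgebra d ξ σ with hLdef
  set φ := LinearMap.liftBaseChange (LaurentPolynomial ℂ) L.subtype with hφdef
  -- generators of L
  have hgen : ∀ (i : ℤ) (x : 𝔤), S x = ξ ^ (i % (d : ℤ)).toNat • x →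
      (T i ⊗ₜ[ℂ] x) ∈ L := by
    intro i x hx
    exact Submodule.subset_span ⟨i, x, hx, rfl⟩
  have hmem : ∀ (j : Fin d) (x : 𝔤),
      (T ((j:ℕ):ℤ) ⊗ₜ[ℂ] (projE d ξ S (j:ℕ) x)) ∈ L := by
    intro j x
    apply hgen
    have h1 : (((j:ℕ):ℤ) % (d:ℤ)).toNat = (j:ℕ) := by
      rw [Int.emod_eq_of_lt (by positivity) (by exact_mod_cast j.2)]
      simp
    rw [h1]
    conv_lhs => rw [← Module.End.mul_apply, projE_comm hd hξ hσ (j:ℕ), LinearMap.smul_apply]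
  -- the ℂ-linear maps n j : 𝔤 → LP ⊗[base] L
  set n : Fin d → (𝔤 →ₗ[ℂ] (LaurentPolynomial ℂ ⊗[laurentBase d] L)) := fun j =>
    { toFun := fun x => T (-((j:ℕ):ℤ)) ⊗ₜ[laurentBase d]
        (⟨T ((j:ℕ):ℤ) ⊗ₜ[ℂ] (projE d ξ S (j:ℕ) x), hmem j x⟩ : L)
      map_add' := by
        intro x y
        have h1 : (⟨T ((j:ℕ):ℤ) ⊗ₜ[ℂ] projE d ξ S (j:ℕ) (x + y), hmem j (x + y)⟩ : L)
            = ⟨T ((j:ℕ):ℤ) ⊗ₜ[ℂ] projE d ξ S (j:ℕ) x, hmem j x⟩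
              + ⟨T ((j:ℕ):ℤ) ⊗ₜ[ℂ] projE d ξ S (j:ℕ) y, hmem j y⟩ := by
          apply Subtype.ext
          simp [map_add, TensorProduct.tmul_add]
        rw [h1, TensorProduct.tmul_add]
      map_smul' := by
        intro c x
        have h1 : (⟨T ((j:ℕ):ℤ) ⊗ₜ[ℂ] projE d ξ S (j:ℕ) (c • x), hmem j (c • x)⟩ : L)
            = c • ⟨T ((j:ℕ):ℤ) ⊗ₜ[ℂ] projE d ξ S (j:ℕ) x, hmem j x⟩ := by
          apply Subtype.ext
          simp [map_smul, TensorProduct.tmul_smul]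
        rw [h1, TensorProduct.tmul_smul]
        rfl } with hndef
  have napply : ∀ (j : Fin d) (x : 𝔤), n j x = T (-((j:ℕ):ℤ)) ⊗ₜ[laurentBase d]
      (⟨T ((j:ℕ):ℤ) ⊗ₜ[ℂ] (projE d ξ S (j:ℕ) x), hmem j x⟩ : L) := fun j x => rfl
  set ψ : LaurentPolynomial ℂ ⊗[ℂ] 𝔤 →ₗ[LaurentPolynomial ℂ] (LaurentPolynomial ℂ ⊗[laurentBase d] L) :=
    ∑ j : Fin d, LinearMap.liftBaseChange (LaurentPolynomial ℂ) (n j) with hψdef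
  have hψ_tmul : ∀ (p : LaurentPolynomial ℂ) (x : 𝔤),
      ψ (p ⊗ₜ[ℂ] x) = ∑ j : Fin d, (p * T (-((j:ℕ):ℤ))) ⊗ₜ[laurentBase d]
        (⟨T ((j:ℕ):ℤ) ⊗ₜ[ℂ] projE d ξ S (j:ℕ) x, hmem j x⟩ : L) := by
    intro p x
    rw [hψdef, LinearMap.sum_apply]
    refine Finset.sum_congr rfl fun j _ => ?_
    rw [LinearMap.liftBaseChange_tmul, napply, TensorProduct.smul_tmul', smul_eq_mul]
  -- φ ∘ ψ = id
  have hφψ : ∀ w, φ (ψ w) = w := by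
    intro w
    induction w using TensorProduct.induction_on with
    | zero => simp
    | tmul p x =>
      rw [hψ_tmul, map_sum]
      have step : ∀ j : Fin d,
          φ ((p * T (-((j:ℕ):ℤ))) ⊗ₜ[laurentBase d]
            (⟨T ((j:ℕ):ℤ) ⊗ₜ[ℂ] projE d ξ S (j:ℕ) x, hmem j x⟩ : L))
          = p ⊗ₜ[ℂ] projE d ξ S (j:ℕ) x := by
        intro j
        rw [hφdef, LinearMap.liftBaseChange_tmul]
        have hsub : L.subtype ⟨T ((j:ℕ):ℤ) ⊗ₜ[ℂ] projE d ξ S (j:ℕ) x, hmem j x⟩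
            = T ((j:ℕ):ℤ) ⊗ₜ[ℂ] projE d ξ S (j:ℕ) x := rfl
        rw [hsub, TensorProduct.smul_tmul', smul_eq_mul, mul_assoc, ← T_add]
        norm_num
      rw [Finset.sum_congr rfl (fun j _ => step j), ← TensorProduct.tmul_sum]
      have : ∑ j : Fin d, projE d ξ S (j:ℕ) x = x := by
        have h1 : ∑ j : Fin d, projE d ξ S (j:ℕ) x
            = (∑ j ∈ Finset.range d, projE d ξ S j) x := by
          rw [LinearMap.sum_apply, Fin.sum_univ_eq_sum_range (fun j => projE d ξ S j x)]
        rw [h1, sum_projE hd hξ, Module.End.one_apply]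
      rw [this]
    | add u v hu hv => rw [map_add, map_add, hu, hv]
  -- ψ = (1 ⊗ ·) on L
  have hψ_inL : ∀ z (hz : z ∈ L), ψ z = 1 ⊗ₜ[laurentBase d] (⟨z, hz⟩ : L) := by
    intro z hz
    induction hz using Submodule.span_induction with
    | mem z hzmem =>
      obtain ⟨i, x, hx, rfl⟩ := hzmem
      have hxS : S x = ξ ^ (i % (d:ℤ)).toNat • x := hx
      set m : ℕ := (i % (d:ℤ)).toNat with hmdef
      have h0 : 0 ≤ i % (d:ℤ) := Int.emod_nonneg i (by exact_mod_cast hd.ne')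
      have h1 : i % (d:ℤ) < d := Int.emod_lt_of_pos i (by exact_mod_cast hd)
      have hm : m < d := by omega
      have hmZ : ((m:ℕ):ℤ) = i % (d:ℤ) := Int.toNat_of_nonneg h0
      have hxm : S x = ξ ^ m • x := hxS
      set jm : Fin d := ⟨m, hm⟩ with hjmdef
      rw [hψ_tmul]
      rw [Finset.sum_eq_single jm]
      · -- main term
        have hPm : projE d ξ S m x = x := by
          rw [projE_eigvec hd hξ hm hxm hm, if_pos rfl]
        have hq : i + -((m:ℕ):ℤ) = (d:ℤ) * (i / (d:ℤ)) := by
          have := Int.mul_ediv_add_emod i (d:ℤ)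
          rw [hmZ]; linarith
        set c : laurentBase d := ⟨T ((d:ℤ) * (i / (d:ℤ))), T_mul_mem d _⟩ with hcdef
        have hTc : (T i * T (-((m:ℕ):ℤ)) : LaurentPolynomial ℂ)
            = c • (1 : LaurentPolynomial ℂ) := by
          rw [← T_add, hq, Algebra.smul_def, mul_one]
          rfl
        have hmem' : (T ((m:ℕ):ℤ) ⊗ₜ[ℂ] x) ∈ L := by
          apply hgen
          have : (((m:ℕ):ℤ) % (d:ℤ)).toNat = m := by
            rw [Int.emod_eq_of_lt (by positivity) (by exact_mod_cast hm)]
            simp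
          rw [this]; exact hxm
        have e1 : (⟨T ((m:ℕ):ℤ) ⊗ₜ[ℂ] projE d ξ S m x, hmem jm x⟩ : L)
            = ⟨T ((m:ℕ):ℤ) ⊗ₜ[ℂ] x, hmem'⟩ := Subtype.ext (by
              show T ((m:ℕ):ℤ) ⊗ₜ[ℂ] projE d ξ S m x = T ((m:ℕ):ℤ) ⊗ₜ[ℂ] x
              rw [hPm])
        show (T i * T (-((m:ℕ):ℤ))) ⊗ₜ[laurentBase d]
            (⟨T ((m:ℕ):ℤ) ⊗ₜ[ℂ] projE d ξ S m x, hmem jm x⟩ : L)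
            = 1 ⊗ₜ[laurentBase d] (⟨T i ⊗ₜ[ℂ] x, hgen i x hxS⟩ : L)
        rw [e1, hTc, TensorProduct.smul_tmul]
        congr 1
        apply Subtype.ext
        have hval : (↑(c • (⟨T ((m:ℕ):ℤ) ⊗ₜ[ℂ] x, hmem'⟩ : L)) : LaurentPolynomial ℂ ⊗[ℂ] 𝔤)
            = c • (T ((m:ℕ):ℤ) ⊗ₜ[ℂ] x) := rfl
        rw [hval, Subalgebra.smul_def, TensorProduct.smul_tmul', Algebra.smul_def]
        show (T ((d:ℤ) * (i / (d:ℤ))) * T ((m:ℕ):ℤ)) ⊗ₜ[ℂ] x = T i ⊗ₜ[ℂ] x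
        have hq2 : (d:ℤ) * (i / (d:ℤ)) + ((m:ℕ):ℤ) = i := by linarith
        rw [← T_add, hq2]
      · -- other terms vanish
        intro j _ hj
        have hPj : projE d ξ S (j:ℕ) x = 0 := by
          rw [projE_eigvec hd hξ hm hxm j.2, if_neg]
          intro h
          exact hj (Fin.ext h)
        have e0 : (⟨T ((j:ℕ):ℤ) ⊗ₜ[ℂ] projE d ξ S (j:ℕ) x, hmem j x⟩ : L) = 0 :=
          Subtype.ext (by
            show T ((j:ℕ):ℤ) ⊗ₜ[ℂ] projE d ξ S (j:ℕ) x = _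
            rw [hPj, TensorProduct.tmul_zero]; rfl)
        rw [e0, TensorProduct.tmul_zero]
      · intro h
        exact absurd (Finset.mem_univ jm) h
    | zero =>
      have h0 : (1 : LaurentPolynomial ℂ) ⊗ₜ[laurentBase d] (0 : L)
          = (0 : LaurentPolynomial ℂ ⊗[laurentBase d] L) :=
        TensorProduct.tmul_zero _ (1 : LaurentPolynomial ℂ)
      rw [map_zero]
      exact h0.symm
    | add z w hz hw ihz ihw =>
      rw [map_add, ihz, ihw, ← TensorProduct.tmul_add]
      rfl
    | smul a z hz ih =>
      calc ψ (a • z) = (a : LaurentPolynomial ℂ) • ψ z := map_smul ψ _ _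
        _ = (a : LaurentPolynomial ℂ) • (1 ⊗ₜ[laurentBase d] (⟨z, hz⟩ : L)) := by rw [ih]
        _ = ((a : LaurentPolynomial ℂ) • (1 : LaurentPolynomial ℂ)) ⊗ₜ[laurentBase d]
            (⟨z, hz⟩ : L) := TensorProduct.smul_tmul' _ _ _
        _ = (a • (1 : LaurentPolynomial ℂ)) ⊗ₜ[laurentBase d] (⟨z, hz⟩ : L) := by
            rw [smul_eq_mul, mul_one, Algebra.smul_def, mul_one]; rfl
        _ = 1 ⊗ₜ[laurentBase d] (a • (⟨z, hz⟩ : L)) := TensorProduct.smul_tmul a 1 _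
  -- ψ ∘ φ = id
  have hψφ : ∀ u, ψ (φ u) = u := by
    intro u
    induction u using TensorProduct.induction_on with
    | zero => rw [map_zero, map_zero]
    | tmul p z =>
      obtain ⟨z, hz⟩ := z
      rw [hφdef, LinearMap.liftBaseChange_tmul]
      have hsub : L.subtype ⟨z, hz⟩ = z := rfl
      rw [hsub, map_smul, hψ_inL z hz, TensorProduct.smul_tmul', smul_eq_mul, mul_one]
    | add u v hu hv => rw [map_add, map_add, hu, hv]
  exact ⟨fun a b h => by rw [← hψφ a, ← hψφ b, h], fun w => ⟨ψ w, hφψ w⟩⟩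
end

section
/- Let R be a commutative ring, R' a faithfully flat commutative R-algebra, and L an R-Lie algebra that is finitely presented as an R-module. If the center of L ⊗_R R' (as an R'-Lie algebra) is zero, then the center of L is zero. -/
open TensorProduct

/-- If `R'` is faithfully flat over `R` and `L` is an `R`-Lie algebra which
is finitely presented as an `R`-module, then triviality of the center of `L ⊗_R R'` implies
triviality of the center of `L`. -/
theorem center_eq_bot_of_faithfullyFlat_baseChange {R R' L : Type*} [CommRing R] [CommRing R']
    [Algebra R R'] [Module.FaithfullyFlat R R'] [LieRing L] [LieAlgebra R L]
    [Module.FinitePresentation R L]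
    (h : LieAlgebra.center R' (R' ⊗[R] L) = ⊥) :
    LieAlgebra.center R L = ⊥ := by
  rw [eq_bot_iff]
  intro x hx
  rw [LieSubmodule.mem_bot]
  rw [LieModule.mem_maxTrivSubmodule] at hx
  have hmem : (1 : R') ⊗ₜ[R] x ∈ LieAlgebra.center R' (R' ⊗[R] L) := by
    rw [LieModule.mem_maxTrivSubmodule]
    intro z
    induction z using TensorProduct.induction_on with
    | zero => simp
    | tmul r y =>
        show (r * 1) ⊗ₜ[R] ⁅y, x⁆ = 0
        rw [hx y, TensorProduct.tmul_zero]
    | add a b ha hb => rw [add_lie, ha, hb, add_zero]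
  rw [h, LieSubmodule.mem_bot] at hmem
  -- now deduce x = 0 from 1 ⊗ x = 0 by faithful flatness
  have hf : LinearMap.toSpanSingleton R L x = 0 := by
    rw [Module.FaithfullyFlat.zero_iff_lTensor_zero R R']
    apply TensorProduct.ext'
    intro r' r
    show r' ⊗ₜ[R] (r • x) = 0
    rw [TensorProduct.tmul_smul,
      show r' ⊗ₜ[R] x = r' • ((1:R') ⊗ₜ[R] x) from by rw [smul_tmul', smul_eq_mul, mul_one],
      hmem, smul_zero, smul_zero]
  simpa using congrArg (fun f => f (1 : R)) hf
end
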